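/- arXiv:1803.01039 — 4 statements merged into one kernel-verified Lean document; each statement's English description precedes it below -/
import Mathlib

section
/- Let ν : ℝ → (0,∞) be locally integrable with m(r) := ∫_{−r}^{r} ν(s) ds → ∞ as r → ∞, and suppose ν is bounded with inf ν > 0. Let φ : ℝ → ℝⁿ be bounded and continuous. Then (1/m(r)) ∫_{−r}^{r} ‖φ(s)‖ ν(s) ds → 0 as r → ∞ if and only if for every ε > 0, (1/m(r)) ∫_{M_{r,ε}} ν(s) ds → 0 as r → ∞, where M_{r,ε} = { t ∈ [−r,r] : ‖φ(t)‖ ≥ ε }. -/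
/-! Chebyshev's inequality `ε · ν(M_{r,ε}) ≤ ∫_{-r}^{r} ‖φ‖ ν` gives the forward direction. Conversely,
splitting `[-r, r]` into `M_{r,ε}`, where `‖φ‖ ≤ C`, and its complement, where `‖φ‖ < ε`, gives
`∫_{-r}^{r} ‖φ‖ ν ≤ C · ν(M_{r,ε}) + ε · m(r)`; after dividing by `m(r)` the first term tends to `0`
and `ε` is arbitrary. -/

open Filter MeasureTheory Set Topology

section WeightedSuperlevel

variable {α : Type*} [MeasurableSpace α] {μ : Measure α} {f w : α → ℝ} {K : Set α}

theorem mul_setIntegral_superlevel_le (hf : Measurable f) (hf0 : 0 ≤ f) (hw0 : 0 ≤ w)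
    (hK : MeasurableSet K) (hw : IntegrableOn w K μ) (hfw : IntegrableOn (fun x => f x * w x) K μ)
    (ε : ℝ) :
    ε * ∫ x in K ∩ {x | ε ≤ f x}, w x ∂μ ≤ ∫ x in K, f x * w x ∂μ :=
  calc ε * ∫ x in K ∩ {x | ε ≤ f x}, w x ∂μ
      = ∫ x in K ∩ {x | ε ≤ f x}, ε * w x ∂μ := (integral_const_mul ε w).symm
    _ ≤ ∫ x in K ∩ {x | ε ≤ f x}, f x * w x ∂μ :=
        setIntegral_mono_on ((hw.mono_set inter_subset_left).const_mul ε)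
          (hfw.mono_set inter_subset_left) (hK.inter (measurableSet_le measurable_const hf))
          fun x hx => mul_le_mul_of_nonneg_right hx.2 (hw0 x)
    _ ≤ ∫ x in K, f x * w x ∂μ :=
        setIntegral_mono_set hfw (.of_forall fun x => mul_nonneg (hf0 x) (hw0 x))
          inter_subset_left.eventuallyLE

theorem setIntegral_mul_le_superlevel_add (hf : Measurable f) {C : ℝ} (hfC : ∀ x, f x ≤ C)
    (hw0 : 0 ≤ w) (hK : MeasurableSet K) (hw : IntegrableOn w K μ) (hfw : IntegrableOn (fun x => f x * w x) K μ)
    {ε : ℝ} (hε : 0 ≤ ε) :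
    ∫ x in K, f x * w x ∂μ ≤ C * ∫ x in K ∩ {x | ε ≤ f x}, w x ∂μ + ε * ∫ x in K, w x ∂μ := by
  set S := {x | ε ≤ f x}
  have hS : MeasurableSet S := measurableSet_le measurable_const hf
  have h_on : ∫ x in K ∩ S, f x * w x ∂μ ≤ C * ∫ x in K ∩ S, w x ∂μ := by
    rw [← integral_const_mul]
    exact setIntegral_mono_on (hfw.mono_set inter_subset_left)
      ((hw.mono_set inter_subset_left).const_mul C) (hK.inter hS)
      fun x _ => mul_le_mul_of_nonneg_right (hfC x) (hw0 x)
  have h_off : ∫ x in K \ S, f x * w x ∂μ ≤ ε * ∫ x in K, w x ∂μ :=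
    calc ∫ x in K \ S, f x * w x ∂μ ≤ ∫ x in K \ S, ε * w x ∂μ :=
          setIntegral_mono_on (hfw.mono_set sdiff_subset) ((hw.mono_set sdiff_subset).const_mul ε)
            (hK.diff hS) fun x hx => mul_le_mul_of_nonneg_right (not_le.1 hx.2).le (hw0 x)
      _ = ε * ∫ x in K \ S, w x ∂μ := integral_const_mul ε w
      _ ≤ ε * ∫ x in K, w x ∂μ := mul_le_mul_of_nonneg_left
          (setIntegral_mono_set hw (.of_forall hw0) sdiff_subset.eventuallyLE) hε
  rw [← integral_inter_add_sdiff hS hfw]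
  exact add_le_add h_on h_off

end WeightedSuperlevel

theorem tendsto_zero_of_forall_le_add {β : Type*} {l : Filter β} {a : β → ℝ}
    (ha : ∀ᶠ x in l, 0 ≤ a x)
    (h : ∀ ε > 0, ∃ b : β → ℝ, Tendsto b l (𝓝 0) ∧ ∀ᶠ x in l, a x ≤ b x + ε) :
    Tendsto a l (𝓝 0) := by
  refine Metric.tendsto_nhds.2 fun ε hε => ?_
  obtain ⟨b, hb, hab⟩ := h (ε / 2) (half_pos hε)
  filter_upwards [ha, hab, hb.eventually_lt_const (half_pos hε)] with x hax hbx hbε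
  rw [Real.dist_0_eq_abs, abs_of_nonneg hax]
  linarith

theorem stmt_6_general {n : ℕ} (ν : ℝ → ℝ) (φ : ℝ → (Fin n → ℝ))
    (hνpos : ∀ s, 0 < ν s)
    (hνloc : LocallyIntegrable ν volume)
    (hφc : Continuous φ) (hφb : ∃ C : ℝ, ∀ t, ‖φ t‖ ≤ C) :
    (Tendsto (fun r : ℝ =>
        (∫ s in (-r)..r, ‖φ s‖ * ν s) / (∫ s in (-r)..r, ν s)) atTop (nhds 0))
      ↔
    (∀ ε : ℝ, 0 < ε →
      Tendsto (fun r : ℝ =>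
        (∫ s in (Set.Icc (-r) r ∩ {t : ℝ | ε ≤ ‖φ t‖}), ν s) /
          (∫ s in (-r)..r, ν s)) atTop (nhds 0)) := by
  obtain ⟨C, hC⟩ := hφb
  have hν0 : 0 ≤ ν := fun s => (hνpos s).le
  have hφm : Measurable fun s => ‖φ s‖ := hφc.norm.measurable
  have hν : ∀ r, IntegrableOn ν (Icc (-r) r) := fun r => hνloc.integrableOn_isCompact isCompact_Icc
  have hφν : ∀ r, IntegrableOn (fun s => ‖φ s‖ * ν s) (Icc (-r) r) := fun r =>
    (hν r).bdd_mul hφm.aestronglyMeasurable (.of_forall fun s => by simpa using hC s)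
  have hIcc (g : ℝ → ℝ) : ∀ᶠ r in atTop, ∫ s in (-r)..r, g s = ∫ s in Icc (-r) r, g s := by
    filter_upwards [eventually_ge_atTop 0] with r hr
    rw [intervalIntegral.integral_of_le (by linarith), integral_Icc_eq_integral_Ioc]
  have hm : ∀ᶠ r in atTop, 0 < ∫ s in (-r)..r, ν s := by
    filter_upwards [eventually_gt_atTop 0] with r hr
    exact intervalIntegral.intervalIntegral_pos_of_pos
      (hνloc.integrableOn_isCompact isCompact_uIcc).intervalIntegrable hνpos (by linarith)
  constructor
  · intro h ε hε
    refine squeeze_zero' ?_ ?_ (by simpa using h.const_mul ε⁻¹)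
    · filter_upwards [hm] with r hm
      exact div_nonneg (setIntegral_nonneg (measurableSet_Icc.inter (measurableSet_le
        measurable_const hφm)) fun s _ => hν0 s) hm.le
    · filter_upwards [hm, hIcc fun s => ‖φ s‖ * ν s] with r hm hφν_eq
      rw [hφν_eq, ← mul_div_assoc]
      refine div_le_div_of_nonneg_right ((le_inv_mul_iff₀ hε).2 ?_) hm.le
      exact mul_setIntegral_superlevel_le hφm (fun s => norm_nonneg _) hν0 measurableSet_Icc
        (hν r) (hφν r) ε
  · intro h
    refine tendsto_zero_of_forall_le_add ?_ fun ε hε => ⟨_, by simpa using (h ε hε).const_mul C, ?_⟩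
    · filter_upwards [hm, hIcc fun s => ‖φ s‖ * ν s] with r hm hφν_eq
      rw [hφν_eq]
      exact div_nonneg (setIntegral_nonneg measurableSet_Icc fun s _ =>
        mul_nonneg (norm_nonneg _) (hν0 s)) hm.le
    · filter_upwards [hm, hIcc fun s => ‖φ s‖ * ν s, hIcc ν] with r hm hφν_eq hν_eq
      rw [mul_div_assoc', div_add' _ _ _ hm.ne', div_le_div_iff_of_pos_right hm, hφν_eq]
      have := setIntegral_mul_le_superlevel_add hφm hC hν0 measurableSet_Icc (hν r) (hφν r) hε.le
      rwa [← hν_eq] at this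

theorem stmt_6 {n : ℕ} (ν : ℝ → ℝ) (φ : ℝ → (Fin n → ℝ))
    (hνpos : ∀ s, 0 < ν s)
    (hνloc : LocallyIntegrable ν volume)
    (hνbdd : ∃ b : ℝ, ∀ s, ν s ≤ b)
    (hνinf : ∃ a : ℝ, 0 < a ∧ ∀ s, a ≤ ν s)
    (hm : Tendsto (fun r : ℝ => ∫ s in (-r)..r, ν s) atTop atTop)
    (hφc : Continuous φ) (hφb : ∃ C : ℝ, ∀ t, ‖φ t‖ ≤ C) :
    (Tendsto (fun r : ℝ =>
        (∫ s in (-r)..r, ‖φ s‖ * ν s) / (∫ s in (-r)..r, ν s)) atTop (nhds 0))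
      ↔
    (∀ ε : ℝ, 0 < ε →
      Tendsto (fun r : ℝ =>
        (∫ s in (Set.Icc (-r) r ∩ {t : ℝ | ε ≤ ‖φ t‖}), ν s) /
          (∫ s in (-r)..r, ν s)) atTop (nhds 0)) :=
  stmt_6_general ν φ hνpos hνloc hφc hφb
end

section
/- Let ν : ℝ → (0,∞) be a bounded weight with inf ν > 0 and m(r) = ∫_{−r}^{r} ν(s) ds → ∞. If φ : ℝ → ℝⁿ is bounded continuous with (1/m(r)) ∫_{−r}^{r} ‖φ(s)‖ ν(s) ds → 0 as r → ∞, then for every fixed s ∈ ℝ the translate t ↦ φ(t+s) satisfies (1/m(r)) ∫_{−r}^{r} ‖φ(t+s)‖ ν(t) dt → 0 as r → ∞. -/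
/-!
Since `a ≤ ν ≤ b`, moving the weight along with the translate costs at most a factor `b / a`,
and the shifted window `[-r + s, r + s]` lies in `[-(r + |s|), r + |s|]`. The `ν`-mass `m ρ` of
`[-ρ, ρ]` lies between `2aρ` and `2bρ`, so `m (r + |s|) ≤ (b / a) (1 + |s| / r) m r`. Hence the
translated mean at `r` is at most `(b / a)² (1 + |s| / r)` times the mean at `r + |s|`, which
tends to `0`.
-/

open Filter MeasureTheory

noncomputable def weightedMean (ν f : ℝ → ℝ) (r : ℝ) : ℝ :=
  (∫ t in (-r)..r, f t * ν t) / ∫ t in (-r)..r, ν t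

section WeightedMean

variable {ν f : ℝ → ℝ} {a b r : ℝ}

lemma weightedMean_nonneg (hf0 : ∀ t, 0 ≤ f t) (hν0 : ∀ t, 0 ≤ ν t) (hr : 0 ≤ r) :
    0 ≤ weightedMean ν f r :=
  div_nonneg
    (intervalIntegral.integral_nonneg (by linarith) fun t _ => mul_nonneg (hf0 t) (hν0 t))
    (intervalIntegral.integral_nonneg (by linarith) fun t _ => hν0 t)

lemma two_mul_mul_le_integral_symm (hr : 0 ≤ r) (hν : IntervalIntegrable ν volume (-r) r)
    (hνa : ∀ t, a ≤ ν t) : 2 * r * a ≤ ∫ t in (-r)..r, ν t := by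
  have h := intervalIntegral.integral_mono_on (by linarith) intervalIntegrable_const hν
    fun t _ => hνa t
  rw [intervalIntegral.integral_const, smul_eq_mul] at h
  linarith

lemma integral_symm_le_two_mul_mul (hr : 0 ≤ r) (hν : IntervalIntegrable ν volume (-r) r)
    (hνb : ∀ t, ν t ≤ b) : ∫ t in (-r)..r, ν t ≤ 2 * r * b := by
  have h := intervalIntegral.integral_mono_on (by linarith) hν intervalIntegrable_const
    fun t _ => hνb t
  rw [intervalIntegral.integral_const, smul_eq_mul] at h
  linarith

lemma integral_symm_le_mul_integral_symm (hν : LocallyIntegrable ν volume) (ha : 0 < a)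
    (hνa : ∀ t, a ≤ ν t) (hνb : ∀ t, ν t ≤ b) {R : ℝ} (hr : 0 < r) (hrR : r ≤ R) :
    ∫ t in (-R)..R, ν t ≤ b / a * (R / r) * ∫ t in (-r)..r, ν t := by
  have hν' : ∀ u v, IntervalIntegrable ν volume u v := fun u v =>
    (hν.integrableOn_isCompact isCompact_uIcc).intervalIntegrable
  have hb : 0 ≤ b / a * (R / r) :=
    mul_nonneg (div_nonneg (ha.le.trans ((hνa 0).trans (hνb 0))) ha.le)
      (div_nonneg (by linarith) hr.le)
  calc ∫ t in (-R)..R, ν t ≤ 2 * R * b := integral_symm_le_two_mul_mul (by linarith) (hν' _ _) hνb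
    _ = b / a * (R / r) * (2 * r * a) := by field_simp
    _ ≤ b / a * (R / r) * ∫ t in (-r)..r, ν t :=
      mul_le_mul_of_nonneg_left (two_mul_mul_le_integral_symm hr.le (hν' _ _) hνa) hb

lemma integral_comp_add_right_le_integral_symm {s : ℝ}
    (hf : IntervalIntegrable f volume (-(r + |s|)) (r + |s|)) (hf0 : ∀ t, 0 ≤ f t) (hr : 0 ≤ r) :
    ∫ t in (-r)..r, f (t + s) ≤ ∫ t in (-(r + |s|))..(r + |s|), f t := by
  rw [intervalIntegral.integral_comp_add_right f s]
  exact intervalIntegral.integral_mono_interval (by linarith [neg_abs_le s])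
    (by linarith) (by linarith [le_abs_self s]) (ae_of_all _ hf0) hf

lemma integral_comp_add_right_mul_le (hν : LocallyIntegrable ν volume) (hf : Continuous f)
    (hf0 : ∀ t, 0 ≤ f t) (ha : 0 < a) (hνa : ∀ t, a ≤ ν t) (hνb : ∀ t, ν t ≤ b) (hr : 0 ≤ r)
    (s : ℝ) :
    ∫ t in (-r)..r, f (t + s) * ν t ≤ b / a * ∫ t in (-(r + |s|))..(r + |s|), f t * ν t := by
  have hfν : ∀ u v, IntervalIntegrable (fun t => f t * ν t) volume u v := fun u v =>
    ((hν.continuous_mul hf).integrableOn_isCompact isCompact_uIcc).intervalIntegrable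
  have hfsν : IntervalIntegrable (fun t => f (t + s) * ν t) volume (-r) r :=
    ((hν.continuous_mul (hf.comp (continuous_add_const s))).integrableOn_isCompact
      isCompact_uIcc).intervalIntegrable
  have hshift : IntervalIntegrable (fun t => f (t + s) * ν (t + s)) volume (-r) r := by
    simpa using (hfν (-r + s) (r + s)).comp_add_right s
  -- `ν t ≤ b ≤ (b / a) * ν (t + s)`
  have hν_shift : ∀ t, ν t ≤ b / a * ν (t + s) := fun t => by
    rw [div_mul_eq_mul_div, le_div_iff₀ ha]
    nlinarith [hνb t, hνa (t + s), hνa t]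
  calc ∫ t in (-r)..r, f (t + s) * ν t
      ≤ ∫ t in (-r)..r, b / a * (f (t + s) * ν (t + s)) :=
        intervalIntegral.integral_mono_on (by linarith) hfsν
          (hshift.const_mul _) fun t _ => by
            rw [mul_left_comm]; exact mul_le_mul_of_nonneg_left (hν_shift t) (hf0 _)
    _ = b / a * ∫ t in (-r)..r, f (t + s) * ν (t + s) := intervalIntegral.integral_const_mul _ _
    _ ≤ b / a * ∫ t in (-(r + |s|))..(r + |s|), f t * ν t :=
        mul_le_mul_of_nonneg_left
          (integral_comp_add_right_le_integral_symm (f := fun t => f t * ν t) (hfν _ _)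
            (fun t => mul_nonneg (hf0 t) (ha.trans_le (hνa t)).le) hr)
          (div_nonneg (ha.le.trans ((hνa 0).trans (hνb 0))) ha.le)

lemma weightedMean_comp_add_right_le (hν : LocallyIntegrable ν volume) (hf : Continuous f)
    (hf0 : ∀ t, 0 ≤ f t) (ha : 0 < a) (hνa : ∀ t, a ≤ ν t) (hνb : ∀ t, ν t ≤ b) (hr : 0 < r)
    (s : ℝ) :
    weightedMean ν (fun t => f (t + s)) r ≤
      (b / a) ^ 2 * (1 + |s| / r) * weightedMean ν f (r + |s|) := by
  set R := r + |s|
  have hrR : r ≤ R := le_add_of_nonneg_right (abs_nonneg s)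
  have hW : ∀ ρ, 0 < ρ → 0 < ∫ t in (-ρ)..ρ, ν t := fun ρ hρ =>
    (by positivity : 0 < 2 * ρ * a).trans_le <| two_mul_mul_le_integral_symm hρ.le
      ((hν.integrableOn_isCompact isCompact_uIcc).intervalIntegrable) hνa
  have hWr := hW r hr
  have hWR := hW R (hr.trans_le hrR)
  have hmean : 0 ≤ weightedMean ν f R :=
    weightedMean_nonneg hf0 (fun t => (ha.trans_le (hνa t)).le) (hr.le.trans hrR)
  have hratio : (∫ t in (-R)..R, ν t) / ∫ t in (-r)..r, ν t ≤ b / a * (R / r) :=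
    (div_le_iff₀ hWr).2 (integral_symm_le_mul_integral_symm hν ha hνa hνb hr hrR)
  have hba : 0 ≤ b / a := div_nonneg (ha.le.trans ((hνa 0).trans (hνb 0))) ha.le
  calc weightedMean ν (fun t => f (t + s)) r
      ≤ (b / a * ∫ t in (-R)..R, f t * ν t) / ∫ t in (-r)..r, ν t :=
        div_le_div_of_nonneg_right (integral_comp_add_right_mul_le hν hf hf0 ha hνa hνb hr.le s)
          hWr.le
    _ = b / a * weightedMean ν f R * ((∫ t in (-R)..R, ν t) / ∫ t in (-r)..r, ν t) := by
        unfold weightedMean; field_simp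
    _ ≤ b / a * weightedMean ν f R * (b / a * (R / r)) :=
        mul_le_mul_of_nonneg_left hratio (mul_nonneg hba hmean)
    _ = (b / a) ^ 2 * (1 + |s| / r) * weightedMean ν f R := by
        simp only [R]; field_simp

theorem tendsto_weightedMean_comp_add_right (hν : LocallyIntegrable ν volume)
    (hf : Continuous f) (hf0 : ∀ t, 0 ≤ f t) (ha : 0 < a) (hνa : ∀ t, a ≤ ν t)
    (hνb : ∀ t, ν t ≤ b) (hmean : Tendsto (weightedMean ν f) atTop (nhds 0)) (s : ℝ) :
    Tendsto (weightedMean ν fun t => f (t + s)) atTop (nhds 0) := by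
  have hbound : Tendsto (fun r => (b / a) ^ 2 * (1 + |s| / r) * weightedMean ν f (r + |s|))
      atTop (nhds 0) := by
    simpa using (tendsto_const_nhds.add (tendsto_const_nhds.div_atTop tendsto_id)).const_mul
      ((b / a) ^ 2) |>.mul (hmean.comp (tendsto_atTop_add_const_right _ _ tendsto_id))
  refine tendsto_of_tendsto_of_tendsto_of_le_of_le' tendsto_const_nhds hbound ?_ ?_
  · filter_upwards [eventually_gt_atTop 0] with r hr
    exact weightedMean_nonneg (fun t => hf0 (t + s)) (fun t => (ha.trans_le (hνa t)).le) hr.le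
  · filter_upwards [eventually_gt_atTop 0] with r hr
    exact weightedMean_comp_add_right_le hν hf hf0 ha hνa hνb hr s

end WeightedMean

theorem stmt_7_general {n : ℕ} (ν : ℝ → ℝ) (φ : ℝ → (Fin n → ℝ))
    (hνloc : LocallyIntegrable ν volume)
    (hνbdd : ∃ b : ℝ, ∀ s, ν s ≤ b)
    (hνinf : ∃ a : ℝ, 0 < a ∧ ∀ s, a ≤ ν s)
    (hφc : Continuous φ)
    (herg : Tendsto (fun r : ℝ =>
        (∫ s in (-r)..r, ‖φ s‖ * ν s) / (∫ s in (-r)..r, ν s)) atTop (nhds 0))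
    (s : ℝ) :
    Tendsto (fun r : ℝ =>
        (∫ t in (-r)..r, ‖φ (t + s)‖ * ν t) / (∫ t in (-r)..r, ν t))
      atTop (nhds 0) := by
  obtain ⟨b, hνb⟩ := hνbdd
  obtain ⟨a, ha, hνa⟩ := hνinf
  exact tendsto_weightedMean_comp_add_right hνloc hφc.norm (fun t => norm_nonneg (φ t)) ha hνa
    hνb herg s

theorem stmt_7 {n : ℕ} (ν : ℝ → ℝ) (φ : ℝ → (Fin n → ℝ))
    (hνpos : ∀ s, 0 < ν s)
    (hνloc : LocallyIntegrable ν volume)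
    (hνbdd : ∃ b : ℝ, ∀ s, ν s ≤ b)
    (hνinf : ∃ a : ℝ, 0 < a ∧ ∀ s, a ≤ ν s)
    (hm : Tendsto (fun r : ℝ => ∫ s in (-r)..r, ν s) atTop atTop)
    (hφc : Continuous φ) (hφb : ∃ C : ℝ, ∀ t, ‖φ t‖ ≤ C)
    (herg : Tendsto (fun r : ℝ =>
        (∫ s in (-r)..r, ‖φ s‖ * ν s) / (∫ s in (-r)..r, ν s)) atTop (nhds 0))
    (s : ℝ) :
    Tendsto (fun r : ℝ =>
        (∫ t in (-r)..r, ‖φ (t + s)‖ * ν t) / (∫ t in (-r)..r, ν t))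
      atTop (nhds 0) :=
  stmt_7_general ν φ hνloc hνbdd hνinf hφc herg s
end

section
/- Let ν be a bounded weight on ℝ with inf ν > 0 and m(r) = ∫_{−r}^{r} ν → ∞. Suppose f = g + φ where g : ℝ → ℝⁿ is almost automorphic and φ is bounded continuous with (1/m(r)) ∫_{−r}^{r} ‖φ‖ ν → 0. Then the range of g is contained in the closure of the range of f. -/
open Filter MeasureTheory

def AlmostAutomorphic {n : ℕ} (f : ℝ → (Fin n → ℝ)) : Prop :=
  ∀ s : ℕ → ℝ, ∃ φ : ℕ → ℕ, StrictMono φ ∧ ∃ g : ℝ → (Fin n → ℝ),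
    (∀ t : ℝ, Tendsto (fun k => f (t + s (φ k))) atTop (nhds (g t))) ∧
    (∀ t : ℝ, Tendsto (fun k => g (t - s (φ k))) atTop (nhds (f t)))

/-- the weighted ergodic space `WPAA₀(ℝ, ν)`. -/
def WPAA0 {n : ℕ} (ν : ℝ → ℝ) (φ : ℝ → (Fin n → ℝ)) : Prop :=
  Continuous φ ∧ (∃ C : ℝ, ∀ t, ‖φ t‖ ≤ C) ∧
  Tendsto (fun r : ℝ =>
      (∫ s in (-r)..r, ‖φ s‖ * ν s) / (∫ s in (-r)..r, ν s)) atTop (nhds 0)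

/-- `ν` is a bounded weight with positive infimum whose mass tends to infinity. -/
def WeightUB (ν : ℝ → ℝ) : Prop :=
  (∀ s, 0 < ν s) ∧ LocallyIntegrable ν volume ∧
  (∃ b : ℝ, ∀ s, ν s ≤ b) ∧ (∃ a : ℝ, 0 < a ∧ ∀ s, a ≤ ν s) ∧
  Tendsto (fun r : ℝ => ∫ s in (-r)..r, ν s) atTop atTop

noncomputable def chooseSeq (P : ∀ j : ℕ, (Fin j → ℝ) → ℝ → Prop)
    (h : ∀ j v, ∃ x, P j v x) : ℕ → ℝ :=
  fun j => Classical.choose (h j fun i => chooseSeq P h i)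
termination_by j => j
decreasing_by all_goals exact i.isLt

theorem chooseSeq_spec (P : ∀ j : ℕ, (Fin j → ℝ) → ℝ → Prop)
    (h : ∀ j v, ∃ x, P j v x) (j : ℕ) :
    P j (fun i => chooseSeq P h i) (chooseSeq P h j) := by
  rw [chooseSeq]
  exact Classical.choose_spec _

/-- Key ergodic lemma: a `WPAA₀` function can be made simultaneously small along
finitely many shifts at a single point. -/
theorem exists_small_shifts {n : ℕ} {ν : ℝ → ℝ} {φ : ℝ → (Fin n → ℝ)}
    (hpos : ∀ s, 0 < ν s) (hloc : LocallyIntegrable ν volume)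
    {b : ℝ} (hb : ∀ s, ν s ≤ b) {a : ℝ} (ha : 0 < a) (haν : ∀ s, a ≤ ν s)
    (hcont : Continuous φ) {C : ℝ} (hC : ∀ t, ‖φ t‖ ≤ C)
    (herg : Tendsto (fun r : ℝ =>
      (∫ s in (-r)..r, ‖φ s‖ * ν s) / (∫ s in (-r)..r, ν s)) atTop (nhds 0))
    (k : ℕ) (c : Fin k → ℝ) (δ : ℝ) (hδ : 0 < δ) :
    ∃ x : ℝ, ∀ i, ‖φ (x + c i)‖ < δ := by
  rcases Nat.eq_zero_or_pos k with hk | hk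
  · subst hk; exact ⟨0, fun i => i.elim0⟩
  by_contra hcon
  push_neg at hcon
  have hb0 : 0 < b := lt_of_lt_of_le (hpos 0) (hb 0)
  have hk' : (0:ℝ) < (k:ℝ) := Nat.cast_pos.mpr hk
  obtain ⟨M, hM0, hMi⟩ : ∃ M : ℝ, 0 ≤ M ∧ ∀ i, |c i| ≤ M :=
    ⟨∑ i, |c i|, Finset.sum_nonneg fun i _ => abs_nonneg _, fun i =>
      Finset.single_le_sum (f := fun j => |c j|) (fun j _ => abs_nonneg _) (Finset.mem_univ i)⟩
  have hsum : ∀ x, δ ≤ ∑ i, ‖φ (x + c i)‖ := by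
    intro x
    obtain ⟨i, hi⟩ := hcon x
    exact hi.trans (Finset.single_le_sum (f := fun j => ‖φ (x + c j)‖)
      (fun j _ => norm_nonneg _) (Finset.mem_univ i))
  set ε : ℝ := δ * a ^ 2 / (8 * k * b ^ 2) with hε
  have hε0 : 0 < ε := by positivity
  have hcomp : Tendsto (fun r : ℝ => r + M) atTop atTop :=
    tendsto_atTop_add_const_right _ M tendsto_id
  have hev : ∀ᶠ r : ℝ in atTop,
      (∫ s in (-(r+M))..(r+M), ‖φ s‖ * ν s) / (∫ s in (-(r+M))..(r+M), ν s) < ε :=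
    (herg.comp hcomp).eventually (gt_mem_nhds hε0)
  obtain ⟨r, hrε, hrM, hr1⟩ :=
    ((hev.and ((eventually_ge_atTop M).and (eventually_ge_atTop 1))).exists)
  have hr0 : (0:ℝ) < r := lt_of_lt_of_le one_pos hr1
  set R : ℝ := r + M with hR
  have hR0 : 0 < R := by positivity
  have hrR : r ≤ R := by simp [hR, hM0]
  have hR2r : R ≤ 2 * r := by simp [hR]; linarith
  have hab : -r ≤ r := by linarith
  have habR : -R ≤ R := by linarith
  -- integrability facts
  have iν : ∀ u v : ℝ, IntervalIntegrable ν volume u v := fun u v =>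
    (hloc.integrableOn_isCompact isCompact_uIcc).intervalIntegrable
  have inφ : ∀ (cc u v : ℝ), IntervalIntegrable (fun s => ‖φ (s + cc)‖) volume u v :=
    fun cc u v => ((hcont.comp (continuous_add_right cc)).norm).intervalIntegrable u v
  have νaesm : ∀ u v : ℝ,
      AEStronglyMeasurable ν (volume.restrict (Set.uIoc u v)) := fun u v =>
    hloc.aestronglyMeasurable.restrict
  have hC0 : 0 ≤ C := le_trans (norm_nonneg _) (hC 0)
  have iφν : ∀ (cc u v : ℝ),
      IntervalIntegrable (fun s => ‖φ (s + cc)‖ * ν s) volume u v := by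
    intro cc u v
    apply IntervalIntegrable.mono_fun ((iν u v).const_mul C)
    · exact (((hcont.comp (continuous_add_right cc)).norm).aestronglyMeasurable.restrict).mul
        (νaesm u v)
    · refine Eventually.of_forall fun x => ?_
      have h1 : 0 < ν x := hpos x
      have h2 : ‖φ (x + cc)‖ ≤ C := hC _
      have h3 : (0:ℝ) ≤ ‖φ (x + cc)‖ := norm_nonneg _
      simp only [Real.norm_eq_abs]
      rw [abs_of_nonneg (by positivity), abs_of_nonneg (by positivity)]
      exact mul_le_mul_of_nonneg_right h2 h1.le
  have iφν0 : ∀ u v : ℝ,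
      IntervalIntegrable (fun s => ‖φ s‖ * ν s) volume u v := by
    intro u v
    have := iφν 0 u v
    simpa using this
  -- abbreviations
  set N : ℝ := ∫ s in (-R)..R, ‖φ s‖ with hN
  set P : ℝ := ∫ s in (-R)..R, ‖φ s‖ * ν s with hP
  set Q : ℝ := ∫ s in (-R)..R, ν s with hQ
  set m : ℝ := ∫ s in (-r)..r, ν s with hm
  have hN0 : 0 ≤ N := intervalIntegral.integral_nonneg habR fun x _ => norm_nonneg _
  -- f1 : 2*r*a ≤ m, similarly for Q
  have f1 : 2 * r * a ≤ m := by
    have h1 : (∫ _ in (-r)..r, a) ≤ m :=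
      intervalIntegral.integral_mono_on hab (intervalIntegrable_const) (iν _ _)
        fun x _ => haν x
    rw [intervalIntegral.integral_const, smul_eq_mul] at h1
    linarith [h1, mul_comm (r - -r) a]
  have f1R : 2 * R * a ≤ Q := by
    have h1 : (∫ _ in (-R)..R, a) ≤ Q :=
      intervalIntegral.integral_mono_on habR (intervalIntegrable_const) (iν _ _)
        fun x _ => haν x
    rw [intervalIntegral.integral_const, smul_eq_mul] at h1
    linarith [h1, mul_comm (R - -R) a]
  have hQ0 : 0 < Q := lt_of_lt_of_le (by positivity) f1R
  -- f2 : δ * m ≤ ∑ i, Ii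
  have f2 : δ * m ≤ ∑ i, ∫ s in (-r)..r, ‖φ (s + c i)‖ * ν s := by
    have isum : IntervalIntegrable (fun x => ∑ i, ‖φ (x + c i)‖ * ν x) volume (-r) r := by
      have h' := IntervalIntegrable.sum (μ := volume) (a := -r) (b := r) Finset.univ
        (f := fun (i : Fin k) (s : ℝ) => ‖φ (s + c i)‖ * ν s) (fun i _ => iφν (c i) _ _)
      have he : (∑ i : Fin k, fun (s : ℝ) => ‖φ (s + c i)‖ * ν s) =
          fun x => ∑ i, ‖φ (x + c i)‖ * ν x := by
        funext x
        simp
      rwa [he] at h'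
    have h1 : (∫ s in (-r)..r, δ * ν s) ≤
        ∫ s in (-r)..r, ∑ i, ‖φ (s + c i)‖ * ν s := by
      apply intervalIntegral.integral_mono_on hab ((iν _ _).const_mul δ) isum
      intro x _
      calc δ * ν x ≤ (∑ i, ‖φ (x + c i)‖) * ν x :=
            mul_le_mul_of_nonneg_right (hsum x) (hpos x).le
        _ = ∑ i, ‖φ (x + c i)‖ * ν x := Finset.sum_mul ..
    rw [intervalIntegral.integral_const_mul] at h1
    rw [intervalIntegral.integral_finset_sum (fun i _ => iφν (c i) _ _)] at h1
    exact h1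
  -- f3 : each term ≤ b * N
  have f3 : ∀ i : Fin k, (∫ s in (-r)..r, ‖φ (s + c i)‖ * ν s) ≤ b * N := by
    intro i
    have e1 : (∫ s in (-r)..r, ‖φ (s + c i)‖ * ν s) ≤
        ∫ s in (-r)..r, b * ‖φ (s + c i)‖ := by
      apply intervalIntegral.integral_mono_on hab (iφν (c i) _ _)
        ((inφ (c i) _ _).const_mul b)
      intro x _
      rw [mul_comm b]
      exact mul_le_mul_of_nonneg_left (hb x) (norm_nonneg _)
    have e2 : (∫ s in (-r)..r, b * ‖φ (s + c i)‖) = b * ∫ s in (-r)..r, ‖φ (s + c i)‖ :=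
      intervalIntegral.integral_const_mul ..
    have e3 : (∫ s in (-r)..r, ‖φ (s + c i)‖) = ∫ s in (-r + c i)..(r + c i), ‖φ s‖ :=
      intervalIntegral.integral_comp_add_right (fun u => ‖φ u‖) (c i)
    have e4 : (∫ s in (-r + c i)..(r + c i), ‖φ s‖) ≤ N := by
      apply intervalIntegral.integral_mono_interval (c := -R) (d := R)
      · have := hMi i; have := neg_abs_le (c i); linarith
      · linarith
      · have := hMi i; have := le_abs_self (c i); linarith
      · exact Eventually.of_forall fun x => norm_nonneg _
      · exact (hcont.norm).intervalIntegrable _ _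
    calc (∫ s in (-r)..r, ‖φ (s + c i)‖ * ν s)
        ≤ ∫ s in (-r)..r, b * ‖φ (s + c i)‖ := e1
      _ = b * ∫ s in (-r)..r, ‖φ (s + c i)‖ := e2
      _ = b * ∫ s in (-r + c i)..(r + c i), ‖φ s‖ := by rw [e3]
      _ ≤ b * N := mul_le_mul_of_nonneg_left e4 hb0.le
  have f3sum : (∑ i, ∫ s in (-r)..r, ‖φ (s + c i)‖ * ν s) ≤ (k:ℝ) * (b * N) := by
    calc (∑ i, ∫ s in (-r)..r, ‖φ (s + c i)‖ * ν s)
        ≤ ∑ _i : Fin k, b * N := Finset.sum_le_sum fun i _ => f3 i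
      _ = (k:ℝ) * (b * N) := by simp [Finset.sum_const, nsmul_eq_mul]
  -- f4 : a * N ≤ P
  have f4 : a * N ≤ P := by
    have h1 : (∫ s in (-R)..R, a * ‖φ s‖) ≤ P := by
      apply intervalIntegral.integral_mono_on habR
        ((hcont.norm.intervalIntegrable _ _).const_mul a) (iφν0 _ _)
      intro x _
      rw [mul_comm a]
      exact mul_le_mul_of_nonneg_left (haν x) (norm_nonneg _)
    rwa [intervalIntegral.integral_const_mul] at h1
  -- f5 : P < ε * Q
  have f5 : P < ε * Q := by
    have := hrε
    rw [div_lt_iff₀ hQ0] at this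
    linarith [this]
  -- f6 : Q ≤ 2*R*b
  have f6 : Q ≤ 2 * R * b := by
    have h1 : Q ≤ ∫ _ in (-R)..R, b :=
      intervalIntegral.integral_mono_on habR (iν _ _) intervalIntegrable_const
        fun x _ => hb x
    rw [intervalIntegral.integral_const, smul_eq_mul] at h1
    linarith [h1, mul_comm (R - -R) b]
  -- assemble
  have s1 : δ * (2 * r * a) ≤ (k:ℝ) * (b * N) := by
    calc δ * (2 * r * a) ≤ δ * m := mul_le_mul_of_nonneg_left f1 hδ.le
      _ ≤ _ := f2
      _ ≤ _ := f3sum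
  have s2 : a * ((k:ℝ) * (b * N)) ≤ (k:ℝ) * b * P := by
    calc a * ((k:ℝ) * (b * N)) = ((k:ℝ) * b) * (a * N) := by ring
      _ ≤ ((k:ℝ) * b) * P := mul_le_mul_of_nonneg_left f4 (by positivity)
  have s3 : (k:ℝ) * b * P < (k:ℝ) * b * (ε * Q) :=
    mul_lt_mul_of_pos_left f5 (by positivity)
  have s4 : (k:ℝ) * b * (ε * Q) ≤ (k:ℝ) * b * (ε * (2 * (2 * r) * b)) := by
    apply mul_le_mul_of_nonneg_left _ (by positivity)
    apply mul_le_mul_of_nonneg_left _ hε0.le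
    calc Q ≤ 2 * R * b := f6
      _ ≤ 2 * (2 * r) * b := by nlinarith
  have final : a * (δ * (2 * r * a)) < (k:ℝ) * b * (ε * (2 * (2 * r) * b)) :=
    lt_of_le_of_lt (le_trans (mul_le_mul_of_nonneg_left s1 ha.le) s2) (lt_of_lt_of_le s3 s4)
  have heq : (k:ℝ) * b * (ε * (2 * (2 * r) * b)) = δ * a ^ 2 * r / 2 := by
    rw [hε]
    field_simp
    ring
  have hlhs : a * (δ * (2 * r * a)) = 2 * (δ * a ^ 2 * r) := by ring
  have hX : 0 < δ * a ^ 2 * r := by positivity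
  rw [heq, hlhs] at final
  linarith

theorem stmt_8 {n : ℕ} (ν : ℝ → ℝ) (hν : WeightUB ν)
    (f g φ : ℝ → (Fin n → ℝ))
    (hg : AlmostAutomorphic g) (hφ : WPAA0 ν φ)
    (hf : ∀ t, f t = g t + φ t) :
    Set.range g ⊆ closure (Set.range f) := by
  obtain ⟨hpos, hloc, ⟨b, hb⟩, ⟨a, ha, haν⟩, -⟩ := hν
  obtain ⟨hcont, ⟨C, hC⟩, herg⟩ := hφ
  rintro - ⟨t₀, rfl⟩
  -- build the sequence
  have hP : ∀ (j : ℕ) (v : Fin j → ℝ), ∃ x : ℝ,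
      ∀ i : Fin j, ‖φ (t₀ + x - v i)‖ < 1 / (j + 1) := by
    intro j v
    obtain ⟨x, hx⟩ := exists_small_shifts hpos hloc hb ha haν hcont hC herg
      j (fun i => t₀ - v i) (1 / (j + 1)) (by positivity)
    exact ⟨x, fun i => by have := hx i; rwa [show x + (t₀ - v i) = t₀ + x - v i by ring] at this⟩
  set s : ℕ → ℝ := chooseSeq _ hP with hs
  have hsspec : ∀ (j : ℕ) (i : Fin j), ‖φ (t₀ + s j - s i)‖ < 1 / (j + 1) :=
    fun j => chooseSeq_spec _ hP j
  obtain ⟨σ, hσ, h, h1, h2⟩ := hg s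
  -- each h (t₀ - s (σ k)) is in the closure of the range of f
  have key : ∀ k : ℕ, h (t₀ - s (σ k)) ∈ closure (Set.range f) := by
    intro k
    have hgt : Tendsto (fun j => g (t₀ - s (σ k) + s (σ j))) atTop
        (nhds (h (t₀ - s (σ k)))) := h1 (t₀ - s (σ k))
    have hbound : ∀ᶠ j : ℕ in atTop, ‖φ (t₀ - s (σ k) + s (σ j))‖ ≤ 1 / (j : ℝ) := by
      filter_upwards [eventually_gt_atTop k] with j hj
      have hlt : σ k < σ j := hσ hj
      have hspec := hsspec (σ j) ⟨σ k, hlt⟩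
      have harg : t₀ + s (σ j) - s ((⟨σ k, hlt⟩ : Fin (σ j)) : ℕ) =
          t₀ - s (σ k) + s (σ j) := by ring
      rw [harg] at hspec
      have hσj : (j : ℝ) ≤ (σ j : ℝ) + 1 := by
        have h' : j ≤ σ j := hσ.le_apply
        have h'' : (j : ℝ) ≤ (σ j : ℝ) := by exact_mod_cast h'
        linarith
      have hj0 : (0:ℝ) < (j : ℝ) := by
        exact_mod_cast Nat.lt_of_le_of_lt (Nat.zero_le k) hj
      calc ‖φ (t₀ - s (σ k) + s (σ j))‖ ≤ 1 / ((σ j : ℝ) + 1) := hspec.le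
        _ ≤ 1 / (j : ℝ) := one_div_le_one_div_of_le hj0 hσj
    have hφt : Tendsto (fun j => φ (t₀ - s (σ k) + s (σ j))) atTop (nhds 0) :=
      squeeze_zero_norm' hbound tendsto_one_div_atTop_nhds_zero_nat
    have hft : Tendsto (fun j => f (t₀ - s (σ k) + s (σ j))) atTop
        (nhds (h (t₀ - s (σ k)))) := by
      have hsum' := hgt.add hφt
      rw [add_zero] at hsum'
      exact hsum'.congr fun j => (hf _).symm
    exact mem_closure_of_tendsto hft (Eventually.of_forall fun j => Set.mem_range_self _)
  exact isClosed_closure.mem_of_tendsto (h2 t₀) (Eventually.of_forall key)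
end

section
/- Let ν be a bounded weight on ℝ with inf ν > 0 and m(r) = ∫_{−r}^{r} ν → ∞. The decomposition of a weighted pseudo-almost automorphic function is unique: if g₁ + φ₁ = g₂ + φ₂ with g₁, g₂ almost automorphic and φ₁, φ₂ ∈ WPAA₀(ℝ,ν), then g₁ = g₂ and φ₁ = φ₂. -/
open Filter MeasureTheory

/-!
The difference `h = g₁ - g₂ = φ₂ - φ₁` is almost automorphic, and since the weight is comparable
to Lebesgue measure, the plain mean of `‖h‖` over `[-R, R]` tends to `0`. Cutting `[-R, R]` into
windows of length `2L` then shows that for every `L` some window `[s - L, s + L]` carries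
arbitrarily little of `∫ ‖h‖`. Feeding such centres `σ m` (window `m + 1`, integral `< 1/(m+1)`)
into almost automorphy gives `G = lim h (· + σ (φ k))` with `∫_{-j}^{j} ‖G‖ = 0` for every `j`
by dominated convergence, so `G = 0` a.e.; hence `h t = lim G (t - σ (φ k)) = 0` for a.e. `t`,
and everywhere by continuity.
-/

open Set Topology intervalIntegral

def HasVanishingMeanNorm {E : Type*} [NormedAddCommGroup E] (f : ℝ → E) : Prop :=
  Tendsto (fun R : ℝ => (∫ s in (-R)..R, ‖f s‖) / R) atTop (𝓝 0)

lemma AlmostAutomorphic.sub {n : ℕ} {f g : ℝ → Fin n → ℝ} (hf : AlmostAutomorphic f)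
    (hg : AlmostAutomorphic g) : AlmostAutomorphic (f - g) := by
  intro s
  obtain ⟨φ, hφ, F, hF₁, hF₂⟩ := hf s
  obtain ⟨ψ, hψ, G, hG₁, hG₂⟩ := hg (s ∘ φ)
  exact ⟨φ ∘ ψ, hφ.comp hψ, F - G, fun t => ((hF₁ t).comp hψ.tendsto_atTop).sub (hG₁ t),
    fun t => ((hF₂ t).comp hψ.tendsto_atTop).sub (hG₂ t)⟩

lemma WPAA0.hasVanishingMeanNorm {n : ℕ} {ν : ℝ → ℝ} {φ : ℝ → Fin n → ℝ}
    (hφ : WPAA0 ν φ) (hν : LocallyIntegrable ν volume) {a b : ℝ} (ha : 0 < a)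
    (hνa : ∀ s, a ≤ ν s) (hνb : ∀ s, ν s ≤ b) : HasVanishingMeanNorm φ := by
  have hνi : ∀ x y : ℝ, IntervalIntegrable ν volume x y := fun x y =>
    intervalIntegrable_iff.mpr
      ((hν.integrableOn_isCompact isCompact_uIcc).mono_set uIoc_subset_uIcc)
  have hb : 0 < b := ha.trans_le ((hνa 0).trans (hνb 0))
  refine squeeze_zero' ?_ ?_ ((hφ.2.2.const_mul (2 * b / a)).trans (by rw [mul_zero]))
  all_goals filter_upwards [eventually_gt_atTop 0] with R hR
  · exact div_nonneg (integral_nonneg (by linarith) fun s _ => norm_nonneg _) hR.le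
  have hφν : IntervalIntegrable (fun s => ‖φ s‖ * ν s) volume (-R) R :=
    (hνi _ _).continuousOn_mul hφ.1.norm.continuousOn
  have hweighted : a * ∫ s in (-R)..R, ‖φ s‖ ≤ ∫ s in (-R)..R, ‖φ s‖ * ν s := by
    rw [← intervalIntegral.integral_const_mul]
    refine integral_mono_on (by linarith) (hφ.1.norm.intervalIntegrable _ _ |>.const_mul a) hφν
      fun s _ => ?_
    rw [mul_comm]
    exact mul_le_mul_of_nonneg_left (hνa s) (norm_nonneg _)
  have hmass_ge := integral_mono_on (by linarith) intervalIntegrable_const (hνi (-R) R)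
    fun s _ => hνa s
  have hmass_le := integral_mono_on (by linarith) (hνi (-R) R) intervalIntegrable_const
    fun s _ => hνb s
  rw [intervalIntegral.integral_const, smul_eq_mul] at hmass_ge hmass_le
  have hφν_nonneg : 0 ≤ ∫ s in (-R)..R, ‖φ s‖ * ν s :=
    integral_nonneg (by linarith) fun s _ => mul_nonneg (norm_nonneg _) (ha.le.trans (hνa s))
  calc (∫ s in (-R)..R, ‖φ s‖) / R ≤ (∫ s in (-R)..R, ‖φ s‖ * ν s) / a / R := by
        gcongr
        rwa [le_div_iff₀ ha, mul_comm]
    _ = 2 * b / a * ((∫ s in (-R)..R, ‖φ s‖ * ν s) / (2 * R * b)) := by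
        field_simp
    _ ≤ 2 * b / a * ((∫ s in (-R)..R, ‖φ s‖ * ν s) / ∫ s in (-R)..R, ν s) := by
        gcongr
        · nlinarith
        · linarith

lemma HasVanishingMeanNorm.sub {E : Type*} [NormedAddCommGroup E] {f g : ℝ → E}
    (hfm : HasVanishingMeanNorm f) (hgm : HasVanishingMeanNorm g) (hf : Continuous f)
    (hg : Continuous g) : HasVanishingMeanNorm (f - g) := by
  refine squeeze_zero' ?_ ?_ (by simpa using hfm.add hgm)
  all_goals filter_upwards [eventually_gt_atTop 0] with R hR
  · exact div_nonneg (integral_nonneg (by linarith) fun s _ => norm_nonneg _) hR.le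
  · rw [← add_div,
      ← integral_add (hf.norm.intervalIntegrable _ _) (hg.norm.intervalIntegrable _ _)]
    gcongr
    exact integral_mono_on (by linarith) ((hf.sub hg).norm.intervalIntegrable _ _)
      ((hf.norm.add hg.norm).intervalIntegrable _ _) fun s _ => norm_sub_le _ _

lemma HasVanishingMeanNorm.exists_integral_norm_comp_add_lt {E : Type*} [NormedAddCommGroup E]
    {f : ℝ → E} (hm : HasVanishingMeanNorm f) (hf : Continuous f) {L δ : ℝ} (hL : 0 < L)
    (hδ : 0 < δ) : ∃ s, ∫ t in (-L)..L, ‖f (t + s)‖ < δ := by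
  by_contra! hbig
  -- `[-kL, kL]` is the union of `k` windows of length `2L`, each carrying at least `δ`.
  have hsum : ∀ k : ℕ, k * δ ≤ ∫ s in (-(k * L))..(k * L), ‖f s‖ := by
    intro k
    have hadj := sum_integral_adjacent_intervals (n := k)
      (a := fun i : ℕ => -(k * L) + 2 * i * L)
      fun i _ => hf.norm.intervalIntegrable (μ := volume) _ _
    calc (k : ℝ) * δ = ∑ i ∈ Finset.range k, δ := by simp
      _ ≤ ∑ i ∈ Finset.range k, ∫ s in (-(k * L) + 2 * i * L)..(-(k * L) + 2 * (i + 1 : ℕ) * L),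
          ‖f s‖ := Finset.sum_le_sum fun i _ => by
        have hi := hbig (-(k * L) + (2 * i + 1) * L)
        rw [integral_comp_add_right (fun s => ‖f s‖)] at hi
        convert hi using 2 <;> push_cast <;> ring
      _ = ∫ s in (-(k * L))..(k * L), ‖f s‖ := by rw [hadj]; congr 1 <;> push_cast <;> ring
  have hlim := hm.comp (tendsto_natCast_atTop_atTop.atTop_mul_const hL)
  have hpos : δ / L ≤ 0 := by
    refine ge_of_tendsto hlim ?_
    filter_upwards [eventually_ge_atTop 1] with k hk
    have hk' : (0 : ℝ) < k := by exact_mod_cast hk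
    calc δ / L = k * δ / (k * L) := by field_simp
      _ ≤ _ := div_le_div_of_nonneg_right (hsum k) (by positivity)
  have : 0 < δ / L := by positivity
  linarith

lemma ae_eq_zero_of_integral_norm_eq_zero {E : Type*} [NormedAddCommGroup E] {G : ℝ → E}
    (hG : ∀ j : ℕ, IntervalIntegrable (fun t => ‖G t‖) volume (-j) j)
    (h0 : ∀ j : ℕ, ∫ t in (-j : ℝ)..j, ‖G t‖ = 0) : G =ᵐ[volume] 0 := by
  have hcover : ⋃ j : ℕ, Ioc (-j : ℝ) j = univ := by
    refine eq_univ_of_forall fun t => mem_iUnion.2 ?_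
    obtain ⟨j, hj⟩ := exists_nat_gt |t|
    exact ⟨j, by constructor <;> linarith [neg_abs_le t, le_abs_self t]⟩
  rw [← Measure.restrict_univ (μ := volume), ← hcover]
  refine (ae_restrict_iUnion_iff _ _).2 fun j => ?_
  have hj : (-j : ℝ) ≤ j := by linarith [(Nat.cast_nonneg j : (0 : ℝ) ≤ j)]
  filter_upwards [(integral_eq_zero_iff_of_le_of_nonneg_ae hj
    (ae_of_all _ fun t => norm_nonneg (G t)) (hG j)).1 (h0 j)] with t ht
  exact norm_eq_zero.1 ht

lemma eq_zero_of_tendsto_comp_sub {E : Type*} [NormedAddCommGroup E] {h G : ℝ → E}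
    (hc : Continuous h) (hG : G =ᵐ[volume] 0) (c : ℕ → ℝ)
    (hlim : ∀ t, Tendsto (fun k => G (t - c k)) atTop (𝓝 (h t))) : h = 0 := by
  have hshift : ∀ k, ∀ᵐ t, G (t - c k) = 0 := fun k =>
    (measurePreserving_sub_right volume (c k)).quasiMeasurePreserving.ae hG
  refine (hc.ae_eq_iff_eq volume continuous_const).1 ?_
  filter_upwards [ae_all_iff.2 hshift] with t ht
  exact tendsto_nhds_unique (hlim t) (tendsto_const_nhds.congr fun k => (ht k).symm)

lemma AlmostAutomorphic.eq_zero_of_hasVanishingMeanNorm {n : ℕ} {h : ℝ → Fin n → ℝ}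
    (hAA : AlmostAutomorphic h) (hm : HasVanishingMeanNorm h) (hc : Continuous h) {C : ℝ}
    (hC : ∀ t, ‖h t‖ ≤ C) : h = 0 := by
  choose σ hσ using fun m : ℕ => hm.exists_integral_norm_comp_add_lt hc
    (L := m + 1) (δ := 1 / (m + 1)) (by positivity) (by positivity)
  obtain ⟨φ, hφ, G, hG₁, hG₂⟩ := hAA σ
  have hGC : ∀ t, ‖G t‖ ≤ C := fun t =>
    le_of_tendsto (hG₁ t).norm (Eventually.of_forall fun k => hC _)
  have hGm : AEStronglyMeasurable G volume :=
    aestronglyMeasurable_of_tendsto_ae atTop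
      (fun k => (hc.comp (continuous_add_const _)).aestronglyMeasurable) (ae_of_all _ hG₁)
  have hGi : ∀ j : ℕ, IntervalIntegrable (fun t => ‖G t‖) volume (-j) j := fun j =>
    intervalIntegrable_const.mono_fun' hGm.norm.restrict
      (ae_of_all _ fun t => by simpa using hGC t)
  refine eq_zero_of_tendsto_comp_sub hc (ae_eq_zero_of_integral_norm_eq_zero hGi fun j => ?_)
    _ hG₂
  have hlim : Tendsto (fun k => ∫ t in (-j : ℝ)..j, ‖h (t + σ (φ k))‖) atTop
      (𝓝 (∫ t in (-j : ℝ)..j, ‖G t‖)) :=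
    tendsto_integral_filter_of_dominated_convergence (fun _ => C)
      (Eventually.of_forall fun k =>
        (hc.norm.comp (continuous_add_const _)).aestronglyMeasurable)
      (Eventually.of_forall fun k => ae_of_all _ fun t _ => by simpa using hC _)
      intervalIntegrable_const (ae_of_all _ fun t _ => (hG₁ t).norm)
  have hsmall : ∀ᶠ k in atTop, ∫ t in (-j : ℝ)..j, ‖h (t + σ (φ k))‖ ≤ 1 / (φ k + 1) := by
    filter_upwards [eventually_ge_atTop j] with k hk
    have hjk : (j : ℝ) ≤ φ k + 1 := by
      have : (j : ℝ) ≤ φ k := by exact_mod_cast hk.trans hφ.le_apply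
      linarith
    refine (integral_mono_interval (by linarith) (by linarith) hjk
      (ae_of_all _ fun t => norm_nonneg _)
      ((hc.comp (continuous_add_const _)).norm.intervalIntegrable _ _)).trans (hσ (φ k)).le
  refine le_antisymm (le_of_tendsto_of_tendsto hlim
    (tendsto_one_div_add_atTop_nhds_zero_nat.comp hφ.tendsto_atTop) hsmall)
    (integral_nonneg (by linarith [(Nat.cast_nonneg j : (0 : ℝ) ≤ j)]) fun t _ => norm_nonneg _)

theorem stmt_9 {n : ℕ} (ν : ℝ → ℝ) (hν : WeightUB ν)
    (g₁ g₂ φ₁ φ₂ : ℝ → (Fin n → ℝ))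
    (hg₁ : AlmostAutomorphic g₁) (hg₂ : AlmostAutomorphic g₂)
    (hφ₁ : WPAA0 ν φ₁) (hφ₂ : WPAA0 ν φ₂)
    (heq : ∀ t, g₁ t + φ₁ t = g₂ t + φ₂ t) :
    g₁ = g₂ ∧ φ₁ = φ₂ := by
  obtain ⟨-, hνi, ⟨b, hb⟩, ⟨a, ha, hνa⟩, -⟩ := hν
  obtain ⟨C₁, hC₁⟩ := hφ₁.2.1
  obtain ⟨C₂, hC₂⟩ := hφ₂.2.1
  have hdiff : g₁ - g₂ = φ₂ - φ₁ := by
    ext1 t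
    simpa [sub_eq_sub_iff_add_eq_add, add_comm] using heq t
  have hmean : HasVanishingMeanNorm (φ₂ - φ₁) :=
    (hφ₂.hasVanishingMeanNorm hνi ha hνa hb).sub (hφ₁.hasVanishingMeanNorm hνi ha hνa hb)
      hφ₂.1 hφ₁.1
  have hzero : φ₂ - φ₁ = 0 := (hdiff ▸ hg₁.sub hg₂).eq_zero_of_hasVanishingMeanNorm hmean
    (hφ₂.1.sub hφ₁.1) fun t => norm_sub_le_of_le (hC₂ t) (hC₁ t)
  exact ⟨sub_eq_zero.1 (hdiff.trans hzero), (sub_eq_zero.1 hzero).symm⟩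
end
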